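/- Let X = {X_j, j ∈ ℤᵈ} be a wide-sense stationary random field with nonnegative covariance function R(m) = cov(X_0, X_m), and suppose Var S(U_n) ∼ ⟨n⟩·L(n) as n → ∞ for some slowly varying function L : ℕᵈ → ℝ \ {0}. Then L(n) ∼ K_X(n) as n → ∞, where K_X(n) = Σ_{−n ≤ j ≤ n} R(j). -/

import Mathlib

/-!
Since `R ≥ 0`, every row `∑_{j ∈ U_n} R(i - j)` of `Var S(U_n) = ∑_{i,j ∈ U_n} R(i - j)` is at most
`K_X(n)`, so `Var S(U_n) ≤ ⟨n⟩ K_X(n)` and `liminf K_X / L ≥ 1`. Conversely `U_{(k+2)n}` contains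
`k^d ⟨n⟩` points `i` with `i - [-n, n] ⊆ U_{(k+2)n}`, so `Var S(U_{(k+2)n}) ≥ k^d ⟨n⟩ K_X(n)`; as
`L((k+2)n) ∼ L(n)` by slow variation, `limsup K_X / L ≤ ((k+2)/k)^d` for every `k`.
-/

open MeasureTheory Filter ProbabilityTheory
open scoped Classical BigOperators

/-- Covariance of two real random variables. -/
noncomputable def cov {Ω : Type*} [MeasurableSpace Ω] (μ : Measure Ω) (X Y : Ω → ℝ) : ℝ :=
  ∫ ω, (X ω - ∫ ω', X ω' ∂μ) * (Y ω - ∫ ω', Y ω' ∂μ) ∂μ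

/-- Variance of a real random variable. -/
noncomputable def var {Ω : Type*} [MeasurableSpace Ω] (μ : Measure Ω) (X : Ω → ℝ) : ℝ :=
  cov μ X X

/-- Positive (weak) association of a family of real random variables: for all finite
disjoint index sets and all bounded coordinatewise nondecreasing Lipschitz functions,
the covariance is nonnegative. -/
def PosAssoc {Ω ι : Type*} [MeasurableSpace Ω] (μ : Measure Ω) (X : ι → Ω → ℝ) : Prop :=
  ∀ (I J : Finset ι), Disjoint I J →
    ∀ (f : (I → ℝ) → ℝ) (g : (J → ℝ) → ℝ),
      Monotone f → Monotone g →
      (∃ K, LipschitzWith K f) → (∃ K, LipschitzWith K g) →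
      (∃ C, ∀ y, |f y| ≤ C) → (∃ C, ∀ y, |g y| ≤ C) →
      0 ≤ cov μ (fun ω => f fun i => X i ω) (fun ω => g fun j => X j ω)

/-- `L : ℕ^d → ℝ` is slowly varying at infinity. -/
def SlowlyVarying (d : ℕ) (L : (Fin d → ℕ) → ℝ) : Prop :=
  ∀ a : Fin d → ℕ, (∀ k, 0 < a k) →
    Tendsto (fun x : Fin d → ℕ => L (fun k => a k * x k) / L x) atTop (nhds 1)

/-- `K : ℕ → ℝ` is slowly varying at infinity. -/
def SlowlyVarying1 (K : ℕ → ℝ) : Prop :=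
  ∀ a : ℕ, 0 < a → Tendsto (fun r : ℕ => K (a * r) / K r) atTop (nhds 1)

/-- Uniform integrability of a family of random variables. -/
def UnifInt {Ω ι : Type*} [MeasurableSpace Ω] (μ : Measure Ω) (Y : ι → Ω → ℝ) : Prop :=
  ∀ ε : ℝ, 0 < ε → ∃ c : ℝ, ∀ i, ∫ ω in {ω | c ≤ |Y i ω|}, |Y i ω| ∂μ ≤ ε

/-- Strict stationarity of a random field on ℤ^d. -/
def StrictStationary {Ω : Type*} [MeasurableSpace Ω] (μ : Measure Ω) {d : ℕ}
    (X : (Fin d → ℤ) → Ω → ℝ) : Prop :=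
  ∀ (k : ℕ) (j : Fin k → (Fin d → ℤ)) (u : Fin d → ℤ),
    Measure.map (fun ω (i : Fin k) => X (j i + u) ω) μ =
      Measure.map (fun ω (i : Fin k) => X (j i) ω) μ

/-- The block `U_n = {j ∈ ℤ^d : 1 ≤ j ≤ n}`. -/
noncomputable def blockU {d : ℕ} (n : Fin d → ℕ) : Finset (Fin d → ℤ) :=
  Finset.Icc (fun _ => 1) (fun k => (n k : ℤ))

/-- Partial sum of the field over the block `U_n`. -/
noncomputable def partialSum {Ω : Type*} {d : ℕ} (X : (Fin d → ℤ) → Ω → ℝ)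
    (n : Fin d → ℕ) (ω : Ω) : ℝ :=
  ∑ j ∈ blockU n, X j ω

/-- `K_X(n) = Σ_{-n ≤ j ≤ n} R(j)` (sup-norm blocks). -/
noncomputable def KsumF {d : ℕ} (R : (Fin d → ℤ) → ℝ) (n : Fin d → ℕ) : ℝ :=
  ∑ j ∈ Finset.Icc (fun k => -(n k : ℤ)) (fun k => (n k : ℤ)), R j

/-- `K(r) = Σ_{‖j‖ ≤ r} R(j)` (Euclidean balls). -/
noncomputable def Keucl {d : ℕ} (R : (Fin d → ℤ) → ℝ) (r : ℕ) : ℝ :=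
  ∑ j ∈ (Finset.Icc (fun _ => -(r : ℤ)) (fun _ => (r : ℤ))).filter
      (fun j => Real.sqrt (∑ k, ((j k : ℝ)) ^ 2) ≤ (r : ℝ)), R j

open Topology

lemma cov_eq_covariance {Ω : Type*} [MeasurableSpace Ω] (μ : Measure Ω) (X Y : Ω → ℝ) :
    cov μ X Y = covariance X Y μ := rfl

lemma Finset.sum_le_sum_sub_of_forall_sub_mem {G M : Type*} [AddCommGroup G] [DecidableEq G]
    [AddCommMonoid M] [PartialOrder M] [IsOrderedAddMonoid M] {f : G → M} (hf : ∀ x, 0 ≤ f x)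
    {s t : Finset G} (i : G) (hst : ∀ x ∈ s, i - x ∈ t) :
    ∑ x ∈ s, f x ≤ ∑ y ∈ t, f (i - y) := by
  calc ∑ x ∈ s, f x = ∑ y ∈ s.image (i - ·), f (i - y) := by
        rw [Finset.sum_image fun _ _ _ _ h ↦ sub_right_injective h]
        simp only [sub_sub_cancel]
    _ ≤ ∑ y ∈ t, f (i - y) :=
        Finset.sum_le_sum_of_subset_of_nonneg (by simpa [Finset.subset_iff] using hst)
          fun _ _ _ ↦ hf _

noncomputable def blockCovSum {d : ℕ} (R : (Fin d → ℤ) → ℝ) (n : Fin d → ℕ) : ℝ :=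
  ∑ i ∈ blockU n, ∑ j ∈ blockU n, R (i - j)

theorem var_partialSum {Ω : Type*} [MeasurableSpace Ω] {μ : Measure Ω} [IsFiniteMeasure μ]
    {d : ℕ} {X : (Fin d → ℤ) → Ω → ℝ} {R : (Fin d → ℤ) → ℝ} (hL2 : ∀ j, MemLp (X j) 2 μ)
    (hcov : ∀ i j, cov μ (X i) (X j) = R (i - j)) (n : Fin d → ℕ) :
    var μ (partialSum X n) = blockCovSum R n := by
  simp only [var, blockCovSum, ← hcov, cov_eq_covariance]
  exact covariance_fun_sum_fun_sum' (fun j _ ↦ hL2 j) (fun j _ ↦ hL2 j)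

section Blocks

variable {d : ℕ}

lemma card_Icc_pi_int (a b : Fin d → ℤ) (h : ∀ t, a t ≤ b t + 1) :
    ((Finset.Icc a b).card : ℝ) = ∏ t, ((b t + 1 - a t : ℤ) : ℝ) := by
  rw [Pi.card_Icc]
  push_cast
  refine Finset.prod_congr rfl fun t _ ↦ ?_
  rw [Int.card_Icc, ← Int.cast_natCast, Int.toNat_of_nonneg (by linarith [h t])]
  push_cast
  ring

lemma card_blockU (n : Fin d → ℕ) : ((blockU n).card : ℝ) = ∏ t, (n t : ℝ) := by
  rw [blockU, card_Icc_pi_int _ _ fun t ↦ by simp]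
  simp

variable {R : (Fin d → ℤ) → ℝ}

theorem blockCovSum_le (hR : ∀ m, 0 ≤ R m) (n : Fin d → ℕ) :
    blockCovSum R n ≤ (∏ t, (n t : ℝ)) * KsumF R n := by
  have hrow : ∀ i ∈ blockU n, ∑ j ∈ blockU n, R (i - j) ≤ KsumF R n := fun i hi ↦ by
    simpa [KsumF] using Finset.sum_le_sum_sub_of_forall_sub_mem (fun j ↦ hR (i - j)) i
      (s := blockU n) (t := Finset.Icc (fun k ↦ -(n k : ℤ)) (fun k ↦ (n k : ℤ))) fun j hj ↦ by
        simp only [blockU, Finset.mem_Icc, Pi.le_def, Pi.sub_apply] at hi hj ⊢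
        exact ⟨fun t ↦ by linarith [hi.1 t, hj.2 t], fun t ↦ by linarith [hi.2 t, hj.1 t]⟩
  calc blockCovSum R n ≤ ∑ _i ∈ blockU n, KsumF R n := Finset.sum_le_sum hrow
    _ = (∏ t, (n t : ℝ)) * KsumF R n := by rw [Finset.sum_const, nsmul_eq_mul, card_blockU]

theorem prod_mul_KsumF_le_blockCovSum (hR : ∀ m, 0 ≤ R m) (n a : Fin d → ℕ) :
    (∏ t, (a t : ℝ)) * KsumF R n ≤ blockCovSum R (fun t ↦ a t + 2 * n t) := by
  set V := Finset.Icc (fun t ↦ (n t : ℤ) + 1) (fun t ↦ (n t : ℤ) + a t)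
  have hV : V ⊆ blockU (fun t ↦ a t + 2 * n t) := fun i hi ↦ by
    simp only [V, blockU, Finset.mem_Icc, Pi.le_def] at hi ⊢
    push_cast
    exact ⟨fun t ↦ by linarith [hi.1 t], fun t ↦ by linarith [hi.2 t]⟩
  have hrow : ∀ i ∈ V, KsumF R n ≤ ∑ j ∈ blockU (fun t ↦ a t + 2 * n t), R (i - j) :=
    fun i hi ↦ Finset.sum_le_sum_sub_of_forall_sub_mem hR i fun m hm ↦ by
      simp only [V, blockU, Finset.mem_Icc, Pi.le_def, Pi.sub_apply] at hi hm ⊢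
      push_cast
      exact ⟨fun t ↦ by linarith [hi.1 t, hm.2 t], fun t ↦ by linarith [hi.2 t, hm.1 t]⟩
  calc (∏ t, (a t : ℝ)) * KsumF R n = ∑ _i ∈ V, KsumF R n := by
        rw [Finset.sum_const, nsmul_eq_mul, card_Icc_pi_int _ _ fun t ↦ by simp]
        simp
    _ ≤ ∑ i ∈ V, ∑ j ∈ blockU (fun t ↦ a t + 2 * n t), R (i - j) := Finset.sum_le_sum hrow
    _ ≤ blockCovSum R (fun t ↦ a t + 2 * n t) :=
        Finset.sum_le_sum_of_subset_of_nonneg hV fun i _ _ ↦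
          Finset.sum_nonneg fun j _ ↦ hR (i - j)

lemma prod_natCast_const_mul (k : ℕ) (n : Fin d → ℕ) :
    ∏ t, ((k * n t : ℕ) : ℝ) = (k : ℝ) ^ d * ∏ t, (n t : ℝ) := by
  simp [Finset.prod_mul_distrib]

theorem KsumF_div_le_of_scaled_block (hR : ∀ m, 0 ≤ R m) {L : (Fin d → ℕ) → ℝ} {k : ℕ}
    (hk : 0 < k) {n : Fin d → ℕ} (hn : 0 < ∏ t, (n t : ℝ)) (hLn : 0 < L n)
    (hLk : L (fun t ↦ (k + 2) * n t) ≠ 0) :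
    KsumF R n / L n ≤ ((k + 2 : ℝ) / k) ^ d *
      (blockCovSum R (fun t ↦ (k + 2) * n t) /
          ((∏ t, (((k + 2) * n t : ℕ) : ℝ)) * L (fun t ↦ (k + 2) * n t)) *
        (L (fun t ↦ (k + 2) * n t) / L n)) := by
  have hlower := prod_mul_KsumF_le_blockCovSum hR n (fun t ↦ k * n t)
  simp only [prod_natCast_const_mul, ← add_mul] at hlower
  have hrhs : ((k + 2 : ℝ) / k) ^ d * (blockCovSum R (fun t ↦ (k + 2) * n t) /
        (((k : ℝ) + 2) ^ d * (∏ t, (n t : ℝ)) * L (fun t ↦ (k + 2) * n t)) *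
          (L (fun t ↦ (k + 2) * n t) / L n)) =
      blockCovSum R (fun t ↦ (k + 2) * n t) / ((k : ℝ) ^ d * (∏ t, (n t : ℝ)) * L n) := by
    rw [div_pow]
    field_simp
  have hP : ∏ t, (((k + 2) * n t : ℕ) : ℝ) = ((k : ℝ) + 2) ^ d * ∏ t, (n t : ℝ) := by
    simpa using prod_natCast_const_mul (k + 2) n
  rw [hP, hrhs, div_le_div_iff₀ hLn (by positivity)]
  calc KsumF R n * ((k : ℝ) ^ d * (∏ t, (n t : ℝ)) * L n)
        = (k : ℝ) ^ d * (∏ t, (n t : ℝ)) * KsumF R n * L n := by ring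
    _ ≤ blockCovSum R (fun t ↦ (k + 2) * n t) * L n := mul_le_mul_of_nonneg_right hlower hLn.le

end Blocks

theorem tendsto_of_tendsto_le_of_le_family {α β : Type*} [TopologicalSpace β] [LinearOrder β]
    [OrderTopology β] {l : Filter α} {r v : α → β} {w : ℕ → α → β} {c : ℕ → β} {b : β}
    (hv : Tendsto v l (𝓝 b)) (hvr : v ≤ᶠ[l] r) (hw : ∀ k, Tendsto (w k) l (𝓝 (c k)))
    (hrw : ∀ᶠ k in atTop, r ≤ᶠ[l] w k) (hc : Tendsto c atTop (𝓝 b)) :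
    Tendsto r l (𝓝 b) := by
  refine tendsto_order.2 ⟨fun b' hb' ↦ ?_, fun b' hb' ↦ ?_⟩
  · filter_upwards [hv.eventually (lt_mem_nhds hb'), hvr] with n h1 h2 using h1.trans_le h2
  · obtain ⟨k, hk, hck⟩ := (hrw.and (hc.eventually (gt_mem_nhds hb'))).exists
    filter_upwards [hk, (hw k).eventually (gt_mem_nhds hck)] with n h1 h2 using h1.trans_lt h2

lemma tendsto_const_mul_pi_atTop {d : ℕ} {k : ℕ} (hk : 0 < k) :
    Tendsto (fun n : Fin d → ℕ ↦ fun t ↦ k * n t) atTop atTop :=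
  tendsto_atTop_mono (fun n t ↦ Nat.le_mul_of_pos_left (n t) hk) tendsto_id

theorem tendsto_KsumF_div_of_tendsto_blockCovSum_div {d : ℕ} {R : (Fin d → ℤ) → ℝ}
    (hR : ∀ m, 0 ≤ R m) {L : (Fin d → ℕ) → ℝ} (hsv : SlowlyVarying d L)
    (hσ : Tendsto (fun n ↦ blockCovSum R n / ((∏ t, (n t : ℝ)) * L n)) atTop (𝓝 1)) :
    Tendsto (fun n ↦ KsumF R n / L n) atTop (𝓝 1) := by
  set P : (Fin d → ℕ) → ℝ := fun n ↦ ∏ t, (n t : ℝ)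
  set v : (Fin d → ℕ) → ℝ := fun n ↦ blockCovSum R n / (P n * L n)
  have hP : ∀ᶠ n in atTop, 0 < P n := (eventually_ge_atTop 1).mono fun n hn ↦
    Finset.prod_pos fun t _ ↦ by exact_mod_cast hn t
  have hL : ∀ᶠ n in atTop, 0 < L n := by
    filter_upwards [hP, hσ.eventually (lt_mem_nhds one_pos)] with n hPn hvn
    have hσn : 0 ≤ blockCovSum R n :=
      Finset.sum_nonneg fun i _ ↦ Finset.sum_nonneg fun j _ ↦ hR (i - j)
    have hPL : 0 < P n * L n := ((div_pos_iff.1 hvn).resolve_right fun h ↦ h.1.not_ge hσn).2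
    exact pos_of_mul_pos_right hPL hPn.le
  refine tendsto_of_tendsto_le_of_le_family hσ
    (w := fun k n ↦ ((k + 2 : ℝ) / k) ^ d * (v (fun t ↦ (k + 2) * n t) *
      (L (fun t ↦ (k + 2) * n t) / L n)))
    (c := fun k ↦ ((k + 2 : ℝ) / k) ^ d) ?_ (fun k ↦ ?_) ?_ ?_
  · filter_upwards [hP, hL] with n hPn hLn
    calc v n ≤ P n * KsumF R n / (P n * L n) :=
          div_le_div_of_nonneg_right (blockCovSum_le hR n) (by positivity)
      _ = KsumF R n / L n := mul_div_mul_left _ _ hPn.ne'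
  · have hscale := tendsto_const_mul_pi_atTop (d := d) (by omega : 0 < k + 2)
    simpa using tendsto_const_nhds.mul
      ((hσ.comp hscale).mul (hsv (fun _ ↦ k + 2) fun _ ↦ by omega))
  · filter_upwards [eventually_ge_atTop 1] with k hk
    filter_upwards [hP, hL, (tendsto_const_mul_pi_atTop (by omega : 0 < k + 2)).eventually hL]
      with n hPn hLn hLk
    exact KsumF_div_le_of_scaled_block hR (by omega) hPn hLn hLk.ne'
  · simpa using ((tendsto_natCast_div_add_atTop (2 : ℝ)).inv₀ one_ne_zero).pow d

theorem stmt3_general {Ω : Type*} [MeasurableSpace Ω] (μ : Measure Ω) [IsProbabilityMeasure μ]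
    {d : ℕ} (X : (Fin d → ℤ) → Ω → ℝ) (R : (Fin d → ℤ) → ℝ)
    (hL2 : ∀ j, MemLp (X j) 2 μ)
    (hcov : ∀ i j, cov μ (X i) (X j) = R (i - j)) (hR : ∀ m, 0 ≤ R m)
    (L : (Fin d → ℕ) → ℝ) (hsv : SlowlyVarying d L)
    (hvar : Tendsto (fun n : Fin d → ℕ =>
        var μ (partialSum X n) / ((∏ k, (n k : ℝ)) * L n)) atTop (nhds 1)) :
    Tendsto (fun n : Fin d → ℕ => L n / KsumF R n) atTop (nhds 1) := by
  have hσ : Tendsto (fun n ↦ blockCovSum R n / ((∏ k, (n k : ℝ)) * L n)) atTop (𝓝 1) := by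
    simpa only [var_partialSum hL2 hcov] using hvar
  simpa using (tendsto_KsumF_div_of_tendsto_blockCovSum_div hR hsv hσ).inv₀ one_ne_zero

/-- if `Var S(U_n) ∼ ⟨n⟩ L(n)` for some slowly varying `L`, then
`L(n) ∼ K_X(n)` as `n → ∞`. -/
theorem stmt3 {Ω : Type*} [MeasurableSpace Ω] (μ : Measure Ω) [IsProbabilityMeasure μ]
    {d : ℕ} (X : (Fin d → ℤ) → Ω → ℝ) (R : (Fin d → ℤ) → ℝ)
    (hmeas : ∀ j, Measurable (X j)) (hL2 : ∀ j, MemLp (X j) 2 μ)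
    (hcov : ∀ i j, cov μ (X i) (X j) = R (i - j)) (hR : ∀ m, 0 ≤ R m)
    (L : (Fin d → ℕ) → ℝ) (hL0 : ∀ x, L x ≠ 0) (hsv : SlowlyVarying d L)
    (hvar : Tendsto (fun n : Fin d → ℕ =>
        var μ (partialSum X n) / ((∏ k, (n k : ℝ)) * L n)) atTop (nhds 1)) :
    Tendsto (fun n : Fin d → ℕ => L n / KsumF R n) atTop (nhds 1) :=
  stmt3_general μ X R hL2 hcov hR L hsv hvar
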